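/- arXiv:2605.23671 — 4 statements merged into one kernel-verified Lean document; each statement's English description precedes it below -/
import Mathlib

section
/- Once a prosumer buys from the grid it never sells to the grid at a higher base price: there do not exist base prices w₁ < w₂ and a prosumer m ∈ U such that p_m⁺*(w₁) > 0 and p_m⁻*(w₂) > 0. -/
open Finset

variable {U : Type*} [Fintype U]

/-- A point `(p, p⁺, p⁻, x)` is feasible for the L-ESM subproblem:
power balance, generator bounds, and nonnegativity of grid trades. -/
def Feasible (D pbar : U → ℝ) (p pp pm x : U → ℝ) : Prop :=
  ∀ m : U, D m + x m + pm m = p m + pp m ∧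
    0 ≤ p m ∧ p m ≤ pbar m ∧ 0 ≤ pp m ∧ 0 ≤ pm m

/-- Objective of the L-ESM subproblem at base price `w0`. -/
noncomputable def Objective (c b : U → ℝ) (wplus wminus a w0 : ℝ)
    (p pp pm x : U → ℝ) : ℝ :=
  (∑ m : U, (c m / 2 * (p m) ^ 2 + b m * p m + wplus * pp m
      - wminus * pm m - w0 * x m))
    + a / 2 * ∑ m : U, (x m) ^ 2 + a / 2 * (∑ m : U, x m) ^ 2

/-- `(p, p⁺, p⁻, x)` is an optimal solution of the L-ESM subproblem. -/
noncomputable def IsOptimal (c b D pbar : U → ℝ) (wplus wminus a w0 : ℝ)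
    (p pp pm x : U → ℝ) : Prop :=
  Feasible D pbar p pp pm x ∧
    ∀ q qp qm y : U → ℝ, Feasible D pbar q qp qm y →
      Objective c b wplus wminus a w0 p pp pm x ≤
        Objective c b wplus wminus a w0 q qp qm y

/-- Variational inequality satisfied by an optimal point of the L-ESM
subproblem: the directional derivative toward any feasible point is
nonnegative. -/
lemma vi (c b D pbar : U → ℝ) (wplus wminus a w0 : ℝ)
    (hc : ∀ m, 0 < c m) (ha : 0 < a)
    (p pp pm x q qp qm y : U → ℝ)
    (hopt : IsOptimal c b D pbar wplus wminus a w0 p pp pm x)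
    (hfq : Feasible D pbar q qp qm y) :
    0 ≤ ∑ k : U, ((c k * p k + b k) * (q k - p k) + wplus * (qp k - pp k)
      - wminus * (qm k - pm k) + (a * x k + a * (∑ j : U, x j) - w0) * (y k - x k)) := by
  set Lin := ∑ k : U, ((c k * p k + b k) * (q k - p k) + wplus * (qp k - pp k)
      - wminus * (qm k - pm k) + (a * x k + a * (∑ j : U, x j) - w0) * (y k - x k)) with hLin
  set Quad := (∑ k : U, c k / 2 * (q k - p k)^2) + a/2 * (∑ k : U, (y k - x k)^2)
      + a/2 * (∑ k : U, (y k - x k))^2 with hQuad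
  have hQ0 : 0 ≤ Quad := by
    have h1 : 0 ≤ ∑ k : U, c k / 2 * (q k - p k)^2 :=
      Finset.sum_nonneg (fun k _ => by have := (hc k).le; positivity)
    have h2 : 0 ≤ ∑ k : U, (y k - x k)^2 :=
      Finset.sum_nonneg (fun k _ => by positivity)
    have h3 : 0 ≤ (∑ k : U, (y k - x k))^2 := sq_nonneg _
    have ha2 : (0:ℝ) ≤ a/2 := by linarith
    rw [hQuad]
    exact add_nonneg (add_nonneg h1 (mul_nonneg ha2 h2)) (mul_nonneg ha2 h3)
  have key : ∀ t : ℝ, 0 ≤ t → t ≤ 1 → 0 ≤ t * Lin + t^2 * Quad := by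
    intro t ht0 ht1
    have hfeas : Feasible D pbar (fun k => p k + t * (q k - p k))
        (fun k => pp k + t * (qp k - pp k)) (fun k => pm k + t * (qm k - pm k))
        (fun k => x k + t * (y k - x k)) := by
      intro k
      obtain ⟨e1, hp0, hp1, hpp0, hpm0⟩ := hopt.1 k
      obtain ⟨e2, hq0, hq1, hqp0, hqm0⟩ := hfq k
      dsimp only
      refine ⟨by linear_combination (1 - t) * e1 + t * e2, ?_, ?_, ?_, ?_⟩
      · nlinarith [mul_nonneg ht0 hq0, mul_nonneg (sub_nonneg.2 ht1) hp0]
      · nlinarith [mul_nonneg ht0 (sub_nonneg.2 hq1),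
          mul_nonneg (sub_nonneg.2 ht1) (sub_nonneg.2 hp1)]
      · nlinarith [mul_nonneg ht0 hqp0, mul_nonneg (sub_nonneg.2 ht1) hpp0]
      · nlinarith [mul_nonneg ht0 hqm0, mul_nonneg (sub_nonneg.2 ht1) hpm0]
    have hle := hopt.2 _ _ _ _ hfeas
    have hid : Objective c b wplus wminus a w0 (fun k => p k + t * (q k - p k))
        (fun k => pp k + t * (qp k - pp k)) (fun k => pm k + t * (qm k - pm k))
        (fun k => x k + t * (y k - x k))
        = Objective c b wplus wminus a w0 p pp pm x + t * Lin + t^2 * Quad := by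
      have h1 : ∑ k : U, (c k / 2 * (p k + t * (q k - p k)) ^ 2
            + b k * (p k + t * (q k - p k)) + wplus * (pp k + t * (qp k - pp k))
            - wminus * (pm k + t * (qm k - pm k)) - w0 * (x k + t * (y k - x k)))
          = (∑ k : U, (c k / 2 * (p k) ^ 2 + b k * p k + wplus * pp k
              - wminus * pm k - w0 * x k))
            + t * (∑ k : U, ((c k * p k + b k) * (q k - p k) + wplus * (qp k - pp k)
              - wminus * (qm k - pm k) - w0 * (y k - x k)))
            + t^2 * (∑ k : U, c k / 2 * (q k - p k)^2) := by
        rw [Finset.mul_sum, Finset.mul_sum, ← Finset.sum_add_distrib,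
          ← Finset.sum_add_distrib]
        exact Finset.sum_congr rfl (fun k _ => by ring)
      have h2 : ∑ k : U, (x k + t * (y k - x k))^2
          = (∑ k : U, (x k)^2) + t * (∑ k : U, 2 * x k * (y k - x k))
            + t^2 * (∑ k : U, (y k - x k)^2) := by
        rw [Finset.mul_sum, Finset.mul_sum, ← Finset.sum_add_distrib,
          ← Finset.sum_add_distrib]
        exact Finset.sum_congr rfl (fun k _ => by ring)
      have h3 : ∑ k : U, (x k + t * (y k - x k))
          = (∑ k : U, x k) + t * (∑ k : U, (y k - x k)) := by
        rw [Finset.mul_sum, ← Finset.sum_add_distrib]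
      have hsplit : Lin = (∑ k : U, ((c k * p k + b k) * (q k - p k)
            + wplus * (qp k - pp k) - wminus * (qm k - pm k) - w0 * (y k - x k)))
          + ((∑ k : U, a/2 * (2 * x k * (y k - x k)))
            + ∑ k : U, (a * (∑ j : U, x j)) * (y k - x k)) := by
        rw [hLin, ← Finset.sum_add_distrib, ← Finset.sum_add_distrib]
        exact Finset.sum_congr rfl (fun k _ => by ring)
      have hc2 : ∑ k : U, a/2 * (2 * x k * (y k - x k))
          = a/2 * ∑ k : U, 2 * x k * (y k - x k) := (Finset.mul_sum _ _ _).symm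
      have hc3 : ∑ k : U, (a * (∑ j : U, x j)) * (y k - x k)
          = (a * (∑ j : U, x j)) * ∑ k : U, (y k - x k) := (Finset.mul_sum _ _ _).symm
      simp only [Objective]
      rw [h1, h2, h3, hsplit, hc2, hc3, hQuad]
      ring
    rw [hid] at hle
    linarith
  by_contra hneg
  push_neg at hneg
  clear hLin hQuad
  revert hneg hQ0 key
  clear_value Lin Quad
  intro hQ0 key hneg
  rcases eq_or_lt_of_le hQ0 with hQe | hQp
  · have := key 1 zero_le_one le_rfl
    nlinarith
  · set t := min 1 (-Lin / (2 * Quad)) with htdef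
    have ht0 : 0 < t := lt_min one_pos (div_pos (neg_pos.2 hneg) (by linarith))
    have ht1 : t ≤ 1 := min_le_left _ _
    have htr : t ≤ -Lin / (2 * Quad) := min_le_right _ _
    clear_value t
    have htq : t * Quad ≤ -Lin / 2 := by
      have h := htr
      have h2 : t * Quad ≤ (-Lin / (2 * Quad)) * Quad :=
        mul_le_mul_of_nonneg_right h hQp.le
      have heq : (-Lin / (2 * Quad)) * Quad = -Lin / 2 := by
        field_simp
      linarith
    have hk := key t ht0.le ht1
    have e1 : t ^ 2 * Quad = t * (t * Quad) := by ring
    have e2 : t * (t * Quad) ≤ t * (-Lin / 2) := mul_le_mul_of_nonneg_left htq ht0.le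
    have e3 : t * (-Lin / 2) = -(t * Lin) / 2 := by ring
    have e4 : 0 < t * -Lin := mul_pos ht0 (neg_pos.2 hneg)
    have e5 : t * -Lin = -(t * Lin) := by ring
    linarith

/-- once a prosumer buys from the grid it never sells to the
grid at a higher base price. -/
theorem lesm_no_buy_then_sell [Nonempty U]
    (c b D pbar : U → ℝ) (wplus wminus a : ℝ)
    (hc : ∀ m, 0 < c m) (hpbar : ∀ m, 0 ≤ pbar m)
    (hb : ∀ m, 0 < b m) (hbw : ∀ m, b m < wminus)
    (hw : wminus < wplus) (ha : 0 < a)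
    (pstar ppstar pmstar xstar : ℝ → U → ℝ)
    (hopt : ∀ w0 : ℝ, IsOptimal c b D pbar wplus wminus a w0
      (pstar w0) (ppstar w0) (pmstar w0) (xstar w0)) :
    ¬ ∃ (w1 w2 : ℝ) (m : U), w1 < w2 ∧
      0 < ppstar w1 m ∧ 0 < pmstar w2 m := by
  classical
  rintro ⟨w1, w2, m, hw12, hpp1, hpm2⟩
  -- Fact C1: buying from grid at w1 ⇒ a x₁ₘ + a X₁ ≤ w1 - w⁺
  have hf1 : Feasible D pbar (pstar w1) (Function.update (ppstar w1) m 0)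
      (pmstar w1) (Function.update (xstar w1) m (xstar w1 m - ppstar w1 m)) := by
    intro k
    rcases eq_or_ne k m with rfl | hk
    · obtain ⟨e, h0, h1', h2', h3'⟩ := (hopt w1).1 k
      simp only [Function.update_self]
      exact ⟨by linarith, h0, h1', le_rfl, h3'⟩
    · simpa only [Function.update_of_ne hk] using (hopt w1).1 k
  have hv1 := vi c b D pbar wplus wminus a w1 hc ha
    (pstar w1) (ppstar w1) (pmstar w1) (xstar w1) _ _ _ _ (hopt w1) hf1
  rw [Finset.sum_eq_single_of_mem m (Finset.mem_univ m)
    (fun j _ hj => by simp [Function.update_of_ne hj])] at hv1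
  simp only [Function.update_self] at hv1
  have h1 : a * xstar w1 m + a * (∑ j : U, xstar w1 j) ≤ w1 - wplus := by
    by_contra hcon
    push_neg at hcon
    nlinarith [hv1, mul_pos hpp1 (show (0:ℝ) < a * xstar w1 m
      + a * (∑ j : U, xstar w1 j) - (w1 - wplus) by linarith)]
  -- Fact C2: selling to grid at w2 ⇒ w2 - w⁻ ≤ a x₂ₘ + a X₂
  have hf2 : Feasible D pbar (pstar w2) (ppstar w2)
      (Function.update (pmstar w2) m 0)
      (Function.update (xstar w2) m (xstar w2 m + pmstar w2 m)) := by
    intro k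
    rcases eq_or_ne k m with rfl | hk
    · obtain ⟨e, h0, h1', h2', h3'⟩ := (hopt w2).1 k
      simp only [Function.update_self]
      exact ⟨by linarith, h0, h1', h2', le_rfl⟩
    · simpa only [Function.update_of_ne hk] using (hopt w2).1 k
  have hv2 := vi c b D pbar wplus wminus a w2 hc ha
    (pstar w2) (ppstar w2) (pmstar w2) (xstar w2) _ _ _ _ (hopt w2) hf2
  rw [Finset.sum_eq_single_of_mem m (Finset.mem_univ m)
    (fun j _ hj => by simp [Function.update_of_ne hj])] at hv2
  simp only [Function.update_self] at hv2
  have h2 : w2 - wminus ≤ a * xstar w2 m + a * (∑ j : U, xstar w2 j) := by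
    by_contra hcon
    push_neg at hcon
    nlinarith [hv2, mul_pos hpm2 (show (0:ℝ) < (w2 - wminus)
      - (a * xstar w2 m + a * (∑ j : U, xstar w2 j)) by linarith)]
  -- Fact A: per-coordinate monotonicity
  have hA : ∀ k : U, 0 ≤ (xstar w2 k - xstar w1 k) * ((w2 - w1)
      - a * (xstar w2 k - xstar w1 k)
      - a * ((∑ j : U, xstar w2 j) - (∑ j : U, xstar w1 j))) := by
    intro k
    have hfa : Feasible D pbar (Function.update (pstar w1) k (pstar w2 k))
        (Function.update (ppstar w1) k (ppstar w2 k))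
        (Function.update (pmstar w1) k (pmstar w2 k))
        (Function.update (xstar w1) k (xstar w2 k)) := by
      intro j
      rcases eq_or_ne j k with rfl | hj
      · simp only [Function.update_self]
        exact (hopt w2).1 j
      · simpa only [Function.update_of_ne hj] using (hopt w1).1 j
    have hfb : Feasible D pbar (Function.update (pstar w2) k (pstar w1 k))
        (Function.update (ppstar w2) k (ppstar w1 k))
        (Function.update (pmstar w2) k (pmstar w1 k))
        (Function.update (xstar w2) k (xstar w1 k)) := by
      intro j
      rcases eq_or_ne j k with rfl | hj
      · simp only [Function.update_self]
        exact (hopt w1).1 j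
      · simpa only [Function.update_of_ne hj] using (hopt w2).1 j
    have hva := vi c b D pbar wplus wminus a w1 hc ha
      (pstar w1) (ppstar w1) (pmstar w1) (xstar w1) _ _ _ _ (hopt w1) hfa
    have hvb := vi c b D pbar wplus wminus a w2 hc ha
      (pstar w2) (ppstar w2) (pmstar w2) (xstar w2) _ _ _ _ (hopt w2) hfb
    rw [Finset.sum_eq_single_of_mem k (Finset.mem_univ k)
      (fun j _ hj => by simp [Function.update_of_ne hj])] at hva hvb
    simp only [Function.update_self] at hva hvb
    nlinarith [hva, hvb, mul_nonneg (hc k).le (sq_nonneg (pstar w2 k - pstar w1 k))]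
  -- numeric finale
  set X1 := ∑ j : U, xstar w1 j with hX1
  set X2 := ∑ j : U, xstar w2 j with hX2
  have hfac : (w2 - w1) - a * (xstar w2 m - xstar w1 m) - a * (X2 - X1)
      ≤ wminus - wplus := by nlinarith [h1, h2]
  have hdm : xstar w2 m - xstar w1 m ≤ 0 := by
    by_contra hd
    push_neg at hd
    have h6 := mul_le_mul_of_nonneg_left hfac hd.le
    nlinarith [hA m, mul_pos hd (show (0:ℝ) < wplus - wminus by linarith)]
  have hX : w2 - w1 + (wplus - wminus) ≤ a * (X2 - X1) := by
    have hda : a * (xstar w2 m - xstar w1 m) ≤ 0 :=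
      mul_nonpos_of_nonneg_of_nonpos ha.le hdm
    nlinarith [h1, h2]
  have hdk : ∀ k : U, xstar w2 k - xstar w1 k ≤ 0 := by
    intro k
    by_contra hd
    push_neg at hd
    have h5 : (w2 - w1) - a * (xstar w2 k - xstar w1 k) - a * (X2 - X1) < 0 := by
      nlinarith [mul_pos ha hd]
    have := mul_pos hd (neg_pos.2 h5)
    nlinarith [hA k]
  have hXsum : X2 - X1 ≤ 0 := by
    have hsub : X2 - X1 = ∑ k : U, (xstar w2 k - xstar w1 k) :=
      (Finset.sum_sub_distrib _ _).symm
    rw [hsub]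
    exact Finset.sum_nonpos (fun k _ => hdk k)
  nlinarith [mul_nonpos_of_nonneg_of_nonpos ha.le hXsum]
end

section
/- A prosumer that buys from the grid at some base price never operates in the interior Mode 1 at any higher base price: there do not exist base prices w₁ < w₂ and a prosumer m ∈ U such that p_m⁺*(w₁) > 0 while at w₂ one has p_m⁺*(w₂) = 0, p_m⁻*(w₂) = 0, and 0 < p_m*(w₂) < p̄_m. -/
/-!
Everything is governed by the shadow prices `γₖ = w⁰ - a xₖ - a ∑ⱼ xⱼ` (the multipliers of the
power balances). First-order optimality along one-prosumer perturbations gives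
`w⁻ ≤ γₖ ≤ w⁺`, `γₖ = w⁺` while buying, `γₖ = w⁻` while selling and `γₖ = cₖ pₖ + bₖ` in the
interior, so each `xₖ` responds monotonically to `γₖ`. Hence raising `w⁰` from `w₁` to `w₂`
raises `a ∑ x` by less than `w₂ - w₁`: otherwise every prosumer whose intake rose would see its
shadow price fall. For the prosumer `m`, `γₘ(w₁) = w⁺ ≥ γₘ(w₂)`, so `xₘ` must rise; but passing
from buying to the interior mode makes `xₘ` fall.
-/

open Finset

variable {U : Type*} [Fintype U]

theorem nonneg_of_forall_mul_add_sq_mul_nonneg {A B ε : ℝ} (hε : 0 < ε)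
    (h : ∀ t, 0 < t → t ≤ ε → 0 ≤ t * A + t ^ 2 * B) : 0 ≤ A := by
  by_contra! hA
  set t := min ε (-A / (|B| + 1))
  have ht : 0 < t := lt_min hε (div_pos (neg_pos.mpr hA) (by positivity))
  have htB : t * (|B| + 1) ≤ -A := (le_div_iff₀ (by positivity)).mp (min_le_right _ _)
  have hneg : t * A + t ^ 2 * B < 0 := by
    nlinarith [mul_le_mul_of_nonneg_left htB ht.le, le_abs_self B, mul_pos ht ht]
  exact hneg.not_ge (h t ht (min_le_left _ _))

def shadowPrice (a w : ℝ) (x : U → ℝ) (k : U) : ℝ := w - a * x k - a * ∑ j, x j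

section Optimality

variable {c b D pbar : U → ℝ} {wplus wminus a w : ℝ} {p pp pm x : U → ℝ}

theorem objective_update [DecidableEq U] (k : U) (t dp dpp dpm dx : ℝ) :
    Objective c b wplus wminus a w (Function.update p k (p k + t * dp))
        (Function.update pp k (pp k + t * dpp)) (Function.update pm k (pm k + t * dpm))
        (Function.update x k (x k + t * dx)) =
      Objective c b wplus wminus a w p pp pm x +
        t * (dp * (c k * p k + b k) + dpp * wplus - dpm * wminus - dx * shadowPrice a w x k) +
        t ^ 2 * (c k / 2 * dp ^ 2 + a * dx ^ 2) := by
  have off_k : ∀ g : U → ℝ → ℝ → ℝ → ℝ → ℝ,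
      ∑ m ∈ {k}ᶜ, g m (Function.update p k (p k + t * dp) m)
          (Function.update pp k (pp k + t * dpp) m) (Function.update pm k (pm k + t * dpm) m)
          (Function.update x k (x k + t * dx) m) =
        ∑ m ∈ {k}ᶜ, g m (p m) (pp m) (pm m) (x m) := by
    refine fun g ↦ Finset.sum_congr rfl fun m hm ↦ ?_
    rw [Finset.mem_compl, Finset.mem_singleton] at hm
    simp only [Function.update_of_ne hm]
  simp only [Objective, shadowPrice, Fintype.sum_eq_add_sum_compl k, Function.update_self]
  rw [off_k fun m p pp pm x ↦ c m / 2 * p ^ 2 + b m * p + wplus * pp - wminus * pm - w * x,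
    off_k fun _ _ _ _ x ↦ x ^ 2, off_k fun _ _ _ _ x ↦ x]
  ring

namespace IsOptimal

theorem directional_nonneg (hopt : IsOptimal c b D pbar wplus wminus a w p pp pm x) (k : U)
    {dp dpp dpm dx ε : ℝ} (hbal : dp + dpp = dpm + dx) (hε : 0 < ε)
    (hfeas : ∀ t, 0 < t → t ≤ ε →
      0 ≤ p k + t * dp ∧ p k + t * dp ≤ pbar k ∧ 0 ≤ pp k + t * dpp ∧ 0 ≤ pm k + t * dpm) :
    0 ≤ dp * (c k * p k + b k) + dpp * wplus - dpm * wminus - dx * shadowPrice a w x k := by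
  classical
  refine nonneg_of_forall_mul_add_sq_mul_nonneg (B := c k / 2 * dp ^ 2 + a * dx ^ 2) hε
    fun t ht htε ↦ ?_
  have hfeas' : Feasible D pbar (Function.update p k (p k + t * dp))
      (Function.update pp k (pp k + t * dpp)) (Function.update pm k (pm k + t * dpm))
      (Function.update x k (x k + t * dx)) := by
    intro m
    obtain rfl | hm := eq_or_ne m k
    · obtain ⟨hbalm, -⟩ := hopt.1 m
      simp only [Function.update_self]
      exact ⟨by linear_combination hbalm - t * hbal, hfeas t ht htε⟩
    · simpa only [Function.update_of_ne hm] using hopt.1 m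
  have := hopt.2 _ _ _ _ hfeas'
  rw [objective_update] at this
  linarith

variable (hopt : IsOptimal c b D pbar wplus wminus a w p pp pm x) (k : U)
include hopt

theorem shadowPrice_le_wplus : shadowPrice a w x k ≤ wplus := by
  have := hopt.directional_nonneg k (dp := 0) (dpp := 1) (dpm := 0) (dx := 1) (by norm_num) one_pos
    fun t ht _ ↦ by obtain ⟨-, h⟩ := hopt.1 k; refine ⟨?_, ?_, ?_, ?_⟩ <;> linarith
  linarith

theorem wminus_le_shadowPrice : wminus ≤ shadowPrice a w x k := by
  have := hopt.directional_nonneg k (dp := 0) (dpp := 0) (dpm := 1) (dx := -1) (by norm_num) one_pos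
    fun t ht _ ↦ by obtain ⟨-, h⟩ := hopt.1 k; refine ⟨?_, ?_, ?_, ?_⟩ <;> linarith
  linarith

theorem shadowPrice_eq_wplus (hk : 0 < pp k) : shadowPrice a w x k = wplus := by
  have := hopt.directional_nonneg k (dp := 0) (dpp := -1) (dpm := 0) (dx := -1) (by norm_num) hk
    fun t ht _ ↦ by obtain ⟨-, h⟩ := hopt.1 k; refine ⟨?_, ?_, ?_, ?_⟩ <;> linarith
  linarith [hopt.shadowPrice_le_wplus k]

theorem shadowPrice_eq_wminus (hk : 0 < pm k) : shadowPrice a w x k = wminus := by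
  have := hopt.directional_nonneg k (dp := 0) (dpp := 0) (dpm := -1) (dx := 1) (by norm_num) hk
    fun t ht _ ↦ by obtain ⟨-, h⟩ := hopt.1 k; refine ⟨?_, ?_, ?_, ?_⟩ <;> linarith
  linarith [hopt.wminus_le_shadowPrice k]

theorem marginalCost_le_shadowPrice (hk : 0 < p k) : c k * p k + b k ≤ shadowPrice a w x k := by
  have := hopt.directional_nonneg k (dp := -1) (dpp := 0) (dpm := 0) (dx := -1) (by norm_num) hk
    fun t ht _ ↦ by obtain ⟨-, h⟩ := hopt.1 k; refine ⟨?_, ?_, ?_, ?_⟩ <;> linarith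
  linarith

theorem shadowPrice_le_marginalCost (hk : p k < pbar k) :
    shadowPrice a w x k ≤ c k * p k + b k := by
  have := hopt.directional_nonneg k (dp := 1) (dpp := 0) (dpm := 0) (dx := 1) (by norm_num)
    (sub_pos.mpr hk)
    fun t ht _ ↦ by obtain ⟨-, h⟩ := hopt.1 k; refine ⟨?_, ?_, ?_, ?_⟩ <;> linarith
  linarith

theorem x_eq : x k = p k + pp k - pm k - D k := by
  linarith [(hopt.1 k).1]

end IsOptimal

variable {w₁ w₂ : ℝ} {p₁ pp₁ pm₁ x₁ p₂ pp₂ pm₂ x₂ : U → ℝ}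
  (h₁ : IsOptimal c b D pbar wplus wminus a w₁ p₁ pp₁ pm₁ x₁)
  (h₂ : IsOptimal c b D pbar wplus wminus a w₂ p₂ pp₂ pm₂ x₂)
include h₁ h₂

theorem IsOptimal.shadowPrice_le_of_x_lt {k : U} (hck : 0 ≤ c k) (hx : x₁ k < x₂ k) :
    shadowPrice a w₁ x₁ k ≤ shadowPrice a w₂ x₂ k := by
  by_contra! hγ
  have hpp₂ : pp₂ k ≤ 0 := not_lt.mp fun hk ↦ by
    linarith [h₂.shadowPrice_eq_wplus k hk, h₁.shadowPrice_le_wplus k]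
  have hpm₁ : pm₁ k ≤ 0 := not_lt.mp fun hk ↦ by
    linarith [h₁.shadowPrice_eq_wminus k hk, h₂.wminus_le_shadowPrice k]
  have hp : p₁ k < p₂ k := by
    linarith [h₁.x_eq k, h₂.x_eq k, (h₁.1 k).2.2.2.1, (h₂.1 k).2.2.2.2]
  have hmc₂ := h₂.marginalCost_le_shadowPrice k ((h₁.1 k).2.1.trans_lt hp)
  have hmc₁ := h₁.shadowPrice_le_marginalCost k (hp.trans_le (h₂.1 k).2.2.1)
  nlinarith [mul_le_mul_of_nonneg_left hp.le hck]

theorem IsOptimal.mul_sum_sub_lt (hc : ∀ k, 0 ≤ c k) (ha : 0 < a) (hw : w₁ < w₂) :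
    a * (∑ k, x₂ k - ∑ k, x₁ k) < w₂ - w₁ := by
  by_contra! hS
  have hx : ∀ k, x₂ k ≤ x₁ k := fun k ↦ not_lt.mp fun hk ↦ by
    have := h₁.shadowPrice_le_of_x_lt h₂ (hc k) hk
    unfold shadowPrice at this
    nlinarith [mul_pos ha (sub_pos.mpr hk)]
  have : ∑ k, x₂ k ≤ ∑ k, x₁ k := Finset.sum_le_sum fun k _ ↦ hx k
  nlinarith

theorem IsOptimal.x_lt_of_buy_of_interior {m : U} (hcm : 0 < c m) (hw : wminus < wplus)
    (hbuy : 0 < pp₁ m) (hpp₂ : pp₂ m = 0) (hpm₂ : pm₂ m = 0) (hp₂ : 0 < p₂ m)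
    (hp₂' : p₂ m < pbar m) : x₂ m < x₁ m := by
  have hγ₁ := h₁.shadowPrice_eq_wplus m hbuy
  have hpm₁ : pm₁ m ≤ 0 := not_lt.mp fun hk ↦ by
    linarith [h₁.shadowPrice_eq_wminus m hk]
  have hp : p₂ m ≤ p₁ m := by
    rcases lt_or_ge (p₁ m) (pbar m) with hp₁ | hp₁
    · refine le_of_mul_le_mul_left ?_ hcm
      linarith [h₁.shadowPrice_le_marginalCost m hp₁, h₂.marginalCost_le_shadowPrice m hp₂,
        h₂.shadowPrice_le_wplus m]
    · exact hp₂'.le.trans hp₁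
  linarith [h₁.x_eq m, h₂.x_eq m]

end Optimality

theorem lesm_no_buy_then_mode1_general
    (c b D pbar : U → ℝ) (wplus wminus a : ℝ)
    (hc : ∀ m, 0 < c m)
    (hw : wminus < wplus) (ha : 0 < a)
    (pstar ppstar pmstar xstar : ℝ → U → ℝ)
    (hopt : ∀ w0 : ℝ, IsOptimal c b D pbar wplus wminus a w0
      (pstar w0) (ppstar w0) (pmstar w0) (xstar w0)) :
    ¬ ∃ (w1 w2 : ℝ) (m : U), w1 < w2 ∧
      0 < ppstar w1 m ∧
      ppstar w2 m = 0 ∧ pmstar w2 m = 0 ∧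
      0 < pstar w2 m ∧ pstar w2 m < pbar m := by
  rintro ⟨w₁, w₂, m, hw₁₂, hbuy, hpp₂, hpm₂, hp₂, hp₂'⟩
  have hS := (hopt w₁).mul_sum_sub_lt (hopt w₂) (fun k ↦ (hc k).le) ha hw₁₂
  have hx := (hopt w₁).x_lt_of_buy_of_interior (hopt w₂) (hc m) hw hbuy hpp₂ hpm₂ hp₂ hp₂'
  have hγ₁ := (hopt w₁).shadowPrice_eq_wplus m hbuy
  have hγ₂ := (hopt w₂).shadowPrice_le_wplus m
  unfold shadowPrice at hγ₁ hγ₂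
  nlinarith [mul_pos ha (sub_pos.mpr hx)]

/-- a prosumer that buys from the grid at some base price never
operates in the interior Mode 1 at any higher base price. -/
theorem lesm_no_buy_then_mode1 [Nonempty U]
    (c b D pbar : U → ℝ) (wplus wminus a : ℝ)
    (hc : ∀ m, 0 < c m) (hpbar : ∀ m, 0 ≤ pbar m)
    (hb : ∀ m, 0 < b m) (hbw : ∀ m, b m < wminus)
    (hw : wminus < wplus) (ha : 0 < a)
    (pstar ppstar pmstar xstar : ℝ → U → ℝ)
    (hopt : ∀ w0 : ℝ, IsOptimal c b D pbar wplus wminus a w0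
      (pstar w0) (ppstar w0) (pmstar w0) (xstar w0)) :
    ¬ ∃ (w1 w2 : ℝ) (m : U), w1 < w2 ∧
      0 < ppstar w1 m ∧
      ppstar w2 m = 0 ∧ pmstar w2 m = 0 ∧
      0 < pstar w2 m ∧ pstar w2 m < pbar m :=
  lesm_no_buy_then_mode1_general c b D pbar wplus wminus a hc hw ha pstar ppstar pmstar xstar hopt
end

section
/- The second-order cone relaxation is tight for a single leaf branch: let r > 0 and χ > 0 (branch resistance and reactance), v > 0 (squared upstream voltage magnitude), and P, Q ∈ ℝ with P² + Q² > 0. Define f(l) = l·v − (r·l − P)² − (χ·l − Q)² and S = {l ∈ ℝ : l ≥ 0 and f(l) ≥ 0}. If S is nonempty and l* is a minimizer of the identity function l ↦ l over S (equivalently, l* minimizes the line loss r·l over S), then f(l*) = 0, i.e. l*·v = (r·l* − P)² + (χ·l* − Q)². -/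
/-! Since `f 0 = -(P² + Q²) < 0 ≤ f l*` and `f` is continuous, the intermediate value theorem
gives a root of `f` in `[0, l*]`; that root lies in `S`, so by minimality it is `l*` itself. -/

theorem eq_zero_of_isLeast_of_neg {f : ℝ → ℝ} (hf : Continuous f) {a x : ℝ} (ha : f a < 0)
    (hx : IsLeast {l | a ≤ l ∧ 0 ≤ f l} x) : f x = 0 := by
  obtain ⟨⟨hax, hfx⟩, hmin⟩ := hx
  obtain ⟨c, ⟨hac, hcx⟩, hfc⟩ :=
    intermediate_value_Icc hax hf.continuousOn ⟨ha.le, hfx⟩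
  have hxc : x ≤ c := hmin ⟨hac, hfc.ge⟩
  rwa [le_antisymm hcx hxc] at hfc

theorem leaf_branch_socp_tight_general
    (r χ v P Q : ℝ)
    (hPQ : 0 < P ^ 2 + Q ^ 2)
    (f : ℝ → ℝ)
    (hf : f = fun l => l * v - (r * l - P) ^ 2 - (χ * l - Q) ^ 2)
    (S : Set ℝ) (hS : S = {l : ℝ | 0 ≤ l ∧ 0 ≤ f l})
    (lstar : ℝ) (hmem : lstar ∈ S) (hmin : ∀ l ∈ S, lstar ≤ l) :
    f lstar = 0 := by
  subst hS
  have hcont : Continuous f := by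
    subst hf
    fun_prop
  have hf0 : f 0 < 0 := by
    subst hf
    linarith
  exact eq_zero_of_isLeast_of_neg hcont hf0 ⟨hmem, hmin⟩

/-- the SOC relaxation is tight for a single leaf branch with
the upper voltage bound inactive. If `l*` minimizes `l` (equivalently the
line loss `r·l`) over `S = {l ≥ 0 : f(l) ≥ 0}`, where
`f(l) = l·v − (r·l − P)² − (χ·l − Q)²`, then `f(l*) = 0`. -/
theorem leaf_branch_socp_tight
    (r χ v P Q : ℝ) (hr : 0 < r) (hχ : 0 < χ) (hv : 0 < v)
    (hPQ : 0 < P ^ 2 + Q ^ 2)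
    (f : ℝ → ℝ)
    (hf : f = fun l => l * v - (r * l - P) ^ 2 - (χ * l - Q) ^ 2)
    (S : Set ℝ) (hS : S = {l : ℝ | 0 ≤ l ∧ 0 ≤ f l})
    (lstar : ℝ) (hmem : lstar ∈ S) (hmin : ∀ l ∈ S, lstar ≤ l) :
    f lstar = 0 :=
  leaf_branch_socp_tight_general r χ v P Q hPQ f hf S hS lstar hmem hmin
end

section
/- The second-order cone relaxation is tight for a single leaf branch with an active upper voltage limit and adjustable reactive support: let r > 0 and χ > 0, set z = r² + χ², let v > 0 be the squared upstream voltage, P ∈ ℝ the fixed downstream active injection, Q̲ < Q̄ the reactive support bounds, and v̄ ∈ ℝ the upper voltage limit. Define f(l, Q) = l·v − (r·l − P)² − (χ·l − Q)² and the feasible set S = {(l, Q) ∈ ℝ² : l ≥ 0, Q̲ ≤ Q ≤ Q̄, f(l, Q) ≥ 0, and v − z·l + 2·r·P + 2·χ·Q ≤ v̄}. If (l*, Q*) minimizes the loss (l, Q) ↦ r·l over S and Q* > Q̲, then f(l*, Q*) = 0, i.e. l*·v = (r·l* − P)² + (χ·l* − Q*)². -/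
/-!
If the relaxed cone constraint were slack at an optimum with `l* > 0`, move along
`l ↦ l - ε`, `Q ↦ Q - (z / (2χ)) ε`. This direction keeps the downstream voltage fixed,
lowers `Q` (allowed since `Q* > Q̲`) and, for small `ε`, keeps the slack positive by continuity;
it strictly lowers the loss `r l`, a contradiction. At `l* = 0` the constraint reads
`-P² - Q² ≥ 0`, which is tight.
-/

open Filter Topology Set

lemma exists_pos_lt_of_continuousAt_pos {g : ℝ → ℝ} (hg : ContinuousAt g 0) (h0 : 0 < g 0)
    {δ : ℝ} (hδ : 0 < δ) : ∃ ε, 0 < ε ∧ ε < δ ∧ 0 < g ε := by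
  obtain ⟨ε, hgε, hε⟩ :=
    (((hg.eventually (lt_mem_nhds h0)).filter_mono nhdsWithin_le_nhds).and
      (Ioo_mem_nhdsGT hδ)).exists
  exact ⟨ε, hε.1, hε.2, hgε⟩

section LeafBranch

variable (r χ v P : ℝ)

def socSlack (l Q : ℝ) : ℝ := l * v - (r * l - P) ^ 2 - (χ * l - Q) ^ 2

def downstreamSqVoltage (z l Q : ℝ) : ℝ := v - z * l + 2 * r * P + 2 * χ * Q

lemma socSlack_zero_nonpos (Q : ℝ) : socSlack r χ v P 0 Q ≤ 0 := by
  unfold socSlack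
  nlinarith [sq_nonneg P, sq_nonneg Q]

lemma downstreamSqVoltage_sub_sub {χ : ℝ} (hχ : χ ≠ 0) (z l Q ε : ℝ) :
    downstreamSqVoltage r χ v P z (l - ε) (Q - z / (2 * χ) * ε) =
      downstreamSqVoltage r χ v P z l Q := by
  unfold downstreamSqVoltage
  field_simp
  ring

lemma exists_socSlack_pos_sub_sub {l Q Qlb c : ℝ} (hc : 0 < c) (hl : 0 < l) (hQ : Qlb < Q)
    (hslack : 0 < socSlack r χ v P l Q) :
    ∃ ε, 0 < ε ∧ ε < l ∧ Qlb ≤ Q - c * ε ∧ 0 < socSlack r χ v P (l - ε) (Q - c * ε) := by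
  have hcont : ContinuousAt (fun ε => socSlack r χ v P (l - ε) (Q - c * ε)) 0 := by
    unfold socSlack
    fun_prop
  obtain ⟨ε, hε, hεδ, hpos⟩ := exists_pos_lt_of_continuousAt_pos hcont (by simpa using hslack)
    (lt_min hl (div_pos (sub_pos.2 hQ) hc))
  have hεQ : c * ε ≤ Q - Qlb := (le_div_iff₀' hc).1 ((hεδ.trans_le (min_le_right _ _)).le)
  exact ⟨ε, hε, hεδ.trans_le (min_le_left _ _), by linarith, hpos⟩

end LeafBranch

theorem leaf_branch_socp_tight_voltage_general
    (r χ v P Qlb Qub vbar : ℝ)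
    (hr : 0 < r) (hχ : 0 < χ)
    (z : ℝ) (hz : z = r ^ 2 + χ ^ 2)
    (f : ℝ → ℝ → ℝ)
    (hf : f = fun l Q => l * v - (r * l - P) ^ 2 - (χ * l - Q) ^ 2)
    (S : Set (ℝ × ℝ))
    (hS : S = {lq : ℝ × ℝ | 0 ≤ lq.1 ∧ Qlb ≤ lq.2 ∧ lq.2 ≤ Qub ∧
      0 ≤ f lq.1 lq.2 ∧ v - z * lq.1 + 2 * r * P + 2 * χ * lq.2 ≤ vbar})
    (lstar Qstar : ℝ) (hmem : (lstar, Qstar) ∈ S)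
    (hmin : ∀ lq ∈ S, r * lstar ≤ r * lq.1)
    (hQstar : Qlb < Qstar) :
    f lstar Qstar = 0 := by
  subst hf hS
  obtain ⟨hl0, -, hQub, hslack, hvolt⟩ := hmem
  change 0 ≤ socSlack r χ v P lstar Qstar at hslack
  change socSlack r χ v P lstar Qstar = 0
  rcases hl0.eq_or_lt with rfl | hl
  · exact le_antisymm (socSlack_zero_nonpos r χ v P Qstar) hslack
  by_contra hne
  have hc : 0 < z / (2 * χ) := by rw [hz]; positivity
  obtain ⟨ε, hε, hεl, hQlb', hslack'⟩ :=
    exists_socSlack_pos_sub_sub r χ v P hc hl hQstar (hslack.lt_of_ne' hne)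
  have hvolt' := (downstreamSqVoltage_sub_sub r v P hχ.ne' z lstar Qstar ε).trans_le hvolt
  have hloss := hmin (lstar - ε, Qstar - z / (2 * χ) * ε)
    ⟨by linarith, hQlb', by linarith [mul_pos hc hε], hslack'.le, hvolt'⟩
  linarith [mul_pos hr hε]

/-- the SOC relaxation is tight for a single leaf branch with an
active upper voltage limit and adjustable reactive support. If `(l*, Q*)`
minimizes the loss `r·l` over the feasible set `S` (including the upper
voltage limit `v̄` on the downstream squared voltage) and the reactive support
is not at its lower bound (`Q* > Q̲`, Assumption 1), then `f(l*, Q*) = 0`. -/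
theorem leaf_branch_socp_tight_voltage
    (r χ v P Qlb Qub vbar : ℝ)
    (hr : 0 < r) (hχ : 0 < χ) (hv : 0 < v) (hQ : Qlb < Qub)
    (z : ℝ) (hz : z = r ^ 2 + χ ^ 2)
    (f : ℝ → ℝ → ℝ)
    (hf : f = fun l Q => l * v - (r * l - P) ^ 2 - (χ * l - Q) ^ 2)
    (S : Set (ℝ × ℝ))
    (hS : S = {lq : ℝ × ℝ | 0 ≤ lq.1 ∧ Qlb ≤ lq.2 ∧ lq.2 ≤ Qub ∧
      0 ≤ f lq.1 lq.2 ∧ v - z * lq.1 + 2 * r * P + 2 * χ * lq.2 ≤ vbar})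
    (lstar Qstar : ℝ) (hmem : (lstar, Qstar) ∈ S)
    (hmin : ∀ lq ∈ S, r * lstar ≤ r * lq.1)
    (hQstar : Qlb < Qstar) :
    f lstar Qstar = 0 :=
  leaf_branch_socp_tight_voltage_general r χ v P Qlb Qub vbar hr hχ z hz f hf S hS lstar Qstar hmem
    hmin hQstar
end
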